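/- The function φ₃(x) = x·f_2(x)/f_3(x) is convex on (0,∞) (its second derivative is positive there) and strictly increasing on (0,∞); moreover for every x > 0 one has φ₃(x) ≥ 3 and 1/4 ≤ φ₃′(x) ≤ 1. -/
import Mathlib

open Real Set

/-- `f k x = e^x - ∑_{i=0}^{k-1} x^i / i!`. -/
noncomputable def f (k : ℕ) (x : ℝ) : ℝ :=
  Real.exp x - ∑ i ∈ Finset.range k, x ^ i / (Nat.factorial i : ℝ)

/-- `φ₃(x) = x f₂(x)/f₃(x)`. -/
noncomputable def phi3 (x : ℝ) : ℝ := x * f 2 x / f 3 x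

lemma f1_eq (x : ℝ) : f 1 x = Real.exp x - 1 := by
  simp [f]

lemma f2_eq (x : ℝ) : f 2 x = Real.exp x - 1 - x := by
  simp [f, Finset.sum_range_succ]
  ring

lemma f3_eq (x : ℝ) : f 3 x = Real.exp x - 1 - x - x ^ 2 / 2 := by
  simp [f, Finset.sum_range_succ, Nat.factorial]
  ring

/-- Key helper: if `g 0 ≥ 0` and `g' > 0` on `(0,∞)`, then `g > 0` on `(0,∞)`. -/
lemma pos_on_of_hasDerivAt (g g' : ℝ → ℝ) (hd : ∀ x, HasDerivAt g (g' x) x)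
    (h0 : 0 ≤ g 0) (hg' : ∀ x, 0 < x → 0 < g' x) : ∀ x, 0 < x → 0 < g x := by
  intro x hx
  have hmono : StrictMonoOn g (Set.Ici 0) := by
    refine strictMonoOn_of_deriv_pos (convex_Ici 0)
      (fun y _ => (hd y).differentiableAt.continuousAt.continuousWithinAt) ?_
    intro y hy
    rw [interior_Ici] at hy
    rw [(hd y).deriv]
    exact hg' y hy
  have h := hmono Set.self_mem_Ici (Set.mem_Ici.2 hx.le) hx
  linarith

/-- Canonical "exponential form": quartic·e^{2x} + quartic·e^x + quartic. -/
noncomputable def EF (a4 a3 a2 a1 a0 b4 b3 b2 b1 b0 c4 c3 c2 c1 c0 x : ℝ) : ℝ :=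
  (a4*x^4+a3*x^3+a2*x^2+a1*x+a0) * Real.exp (2*x)
    + (b4*x^4+b3*x^3+b2*x^2+b1*x+b0) * Real.exp x
    + (c4*x^4+c3*x^3+c2*x^2+c1*x+c0)

lemma poly_hasDerivAt (u v w s t x : ℝ) :
    HasDerivAt (fun y : ℝ => u*y^4+v*y^3+w*y^2+s*y+t) (4*u*x^3+3*v*x^2+2*w*x+s) x := by
  have h := (((((hasDerivAt_pow 4 x).const_mul u).add
      ((hasDerivAt_pow 3 x).const_mul v)).add
      ((hasDerivAt_pow 2 x).const_mul w)).add ((hasDerivAt_id x).const_mul s)).add_const t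
  refine h.congr_deriv ?_
  push_cast
  ring

lemma EF_hasDerivAt (a4 a3 a2 a1 a0 b4 b3 b2 b1 b0 c4 c3 c2 c1 c0 x : ℝ) :
    HasDerivAt (fun y => EF a4 a3 a2 a1 a0 b4 b3 b2 b1 b0 c4 c3 c2 c1 c0 y)
      (EF (2*a4) (4*a4+2*a3) (3*a3+2*a2) (2*a2+2*a1) (a1+2*a0)
          b4 (4*b4+b3) (3*b3+b2) (2*b2+b1) (b1+b0)
          0 (4*c4) (3*c3) (2*c2) c1 x) x := by
  simp only [EF]
  have h2x : HasDerivAt (fun y : ℝ => 2*y) 2 x := by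
    simpa using (hasDerivAt_id x).const_mul 2
  have hexp2 := h2x.exp
  have hexp := Real.hasDerivAt_exp x
  have h := (((poly_hasDerivAt a4 a3 a2 a1 a0 x).mul hexp2).add
      ((poly_hasDerivAt b4 b3 b2 b1 b0 x).mul hexp)).add (poly_hasDerivAt c4 c3 c2 c1 c0 x)
  refine h.congr_deriv ?_
  push_cast
  ring

lemma cubic_le_exp {y : ℝ} (hy : 0 ≤ y) : 1+y+y^2/2+y^3/6 ≤ Real.exp y := by
  have h := Real.sum_le_exp_of_nonneg hy 4
  have e : ∑ i ∈ Finset.range 4, y ^ i / (Nat.factorial i : ℝ) = 1+y+y^2/2+y^3/6 := by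
    rw [Finset.sum_range_succ, Finset.sum_range_succ, Finset.sum_range_succ,
      Finset.sum_range_succ, Finset.sum_range_zero]
    norm_num [Nat.factorial]
  linarith [e ▸ h]

lemma Q_pos : ∀ x : ℝ, 0 < x → 0 < EF 0 0 1 (-6) 6 (1/2) 0 4 0 (-12) 0 0 1 6 6 x := by
  have h11 : ∀ y : ℝ, 0 < y → 0 < EF 0 0 2048 10240 1024 (1/2) 22 334 2068 4388 0 0 0 0 0 y := by
    intro y hy
    have e2 := Real.exp_pos (2*y)
    have e1 := Real.exp_pos y
    have p1 : (0:ℝ) < 2048*y^2+10240*y+1024 := by nlinarith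
    have p2 : (0:ℝ) < 1/2*y^4+22*y^3+334*y^2+2068*y+4388 := by nlinarith
    simp only [EF]
    nlinarith [mul_pos p1 e2, mul_pos p2 e1]
  have h10 : ∀ y : ℝ, 0 < y → 0 < EF 0 0 1024 4096 (-1536) (1/2) 20 274 1520 2868 0 0 0 0 0 y := by
    refine pos_on_of_hasDerivAt (fun y => EF 0 0 1024 4096 (-1536) (1/2) 20 274 1520 2868 0 0 0 0 0 y) (fun y => EF 0 0 2048 10240 1024 (1/2) 22 334 2068 4388 0 0 0 0 0 y) (fun y => ?_) (by norm_num [EF]) h11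
    have h := EF_hasDerivAt 0 0 1024 4096 (-1536) (1/2) 20 274 1520 2868 0 0 0 0 0 y
    convert h using 1
    simp only [EF]; ring
  have h9 : ∀ y : ℝ, 0 < y → 0 < EF 0 0 512 1536 (-1536) (1/2) 18 220 1080 1788 0 0 0 0 0 y := by
    refine pos_on_of_hasDerivAt (fun y => EF 0 0 512 1536 (-1536) (1/2) 18 220 1080 1788 0 0 0 0 0 y) (fun y => EF 0 0 1024 4096 (-1536) (1/2) 20 274 1520 2868 0 0 0 0 0 y) (fun y => ?_) (by norm_num [EF]) h10
    have h := EF_hasDerivAt 0 0 512 1536 (-1536) (1/2) 18 220 1080 1788 0 0 0 0 0 y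
    convert h using 1
    simp only [EF]; ring
  have h8 : ∀ y : ℝ, 0 < y → 0 < EF 0 0 256 512 (-1024) (1/2) 16 172 736 1052 0 0 0 0 0 y := by
    refine pos_on_of_hasDerivAt (fun y => EF 0 0 256 512 (-1024) (1/2) 16 172 736 1052 0 0 0 0 0 y) (fun y => EF 0 0 512 1536 (-1536) (1/2) 18 220 1080 1788 0 0 0 0 0 y) (fun y => ?_) (by norm_num [EF]) h9
    have h := EF_hasDerivAt 0 0 256 512 (-1024) (1/2) 16 172 736 1052 0 0 0 0 0 y
    convert h using 1
    simp only [EF]; ring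
  have h7 : ∀ y : ℝ, 0 < y → 0 < EF 0 0 128 128 (-576) (1/2) 14 130 476 576 0 0 0 0 0 y := by
    refine pos_on_of_hasDerivAt (fun y => EF 0 0 128 128 (-576) (1/2) 14 130 476 576 0 0 0 0 0 y) (fun y => EF 0 0 256 512 (-1024) (1/2) 16 172 736 1052 0 0 0 0 0 y) (fun y => ?_) (by norm_num [EF]) h8
    have h := EF_hasDerivAt 0 0 128 128 (-576) (1/2) 14 130 476 576 0 0 0 0 0 y
    convert h using 1
    simp only [EF]; ring
  have h6 : ∀ y : ℝ, 0 < y → 0 < EF 0 0 64 0 (-288) (1/2) 12 94 288 288 0 0 0 0 0 y := by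
    refine pos_on_of_hasDerivAt (fun y => EF 0 0 64 0 (-288) (1/2) 12 94 288 288 0 0 0 0 0 y) (fun y => EF 0 0 128 128 (-576) (1/2) 14 130 476 576 0 0 0 0 0 y) (fun y => ?_) (by norm_num [EF]) h7
    have h := EF_hasDerivAt 0 0 64 0 (-288) (1/2) 12 94 288 288 0 0 0 0 0 y
    convert h using 1
    simp only [EF]; ring
  have h5 : ∀ y : ℝ, 0 < y → 0 < EF 0 0 32 (-32) (-128) (1/2) 10 64 160 128 0 0 0 0 0 y := by
    refine pos_on_of_hasDerivAt (fun y => EF 0 0 32 (-32) (-128) (1/2) 10 64 160 128 0 0 0 0 0 y) (fun y => EF 0 0 64 0 (-288) (1/2) 12 94 288 288 0 0 0 0 0 y) (fun y => ?_) (by norm_num [EF]) h6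
    have h := EF_hasDerivAt 0 0 32 (-32) (-128) (1/2) 10 64 160 128 0 0 0 0 0 y
    convert h using 1
    simp only [EF]; ring
  have h4 : ∀ y : ℝ, 0 < y → 0 < EF 0 0 16 (-32) (-48) (1/2) 8 40 80 48 0 0 0 0 0 y := by
    refine pos_on_of_hasDerivAt (fun y => EF 0 0 16 (-32) (-48) (1/2) 8 40 80 48 0 0 0 0 0 y) (fun y => EF 0 0 32 (-32) (-128) (1/2) 10 64 160 128 0 0 0 0 0 y) (fun y => ?_) (by norm_num [EF]) h5
    have h := EF_hasDerivAt 0 0 16 (-32) (-48) (1/2) 8 40 80 48 0 0 0 0 0 y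
    convert h using 1
    simp only [EF]; ring
  have h3 : ∀ y : ℝ, 0 < y → 0 < EF 0 0 8 (-24) (-12) (1/2) 6 22 36 12 0 0 0 0 0 y := by
    refine pos_on_of_hasDerivAt (fun y => EF 0 0 8 (-24) (-12) (1/2) 6 22 36 12 0 0 0 0 0 y) (fun y => EF 0 0 16 (-32) (-48) (1/2) 8 40 80 48 0 0 0 0 0 y) (fun y => ?_) (by norm_num [EF]) h4
    have h := EF_hasDerivAt 0 0 8 (-24) (-12) (1/2) 6 22 36 12 0 0 0 0 0 y
    convert h using 1
    simp only [EF]; ring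
  have h2 : ∀ y : ℝ, 0 < y → 0 < EF 0 0 4 (-16) 2 (1/2) 4 10 16 (-4) 0 0 0 0 2 y := by
    refine pos_on_of_hasDerivAt (fun y => EF 0 0 4 (-16) 2 (1/2) 4 10 16 (-4) 0 0 0 0 2 y) (fun y => EF 0 0 8 (-24) (-12) (1/2) 6 22 36 12 0 0 0 0 0 y) (fun y => ?_) (by norm_num [EF]) h3
    have h := EF_hasDerivAt 0 0 4 (-16) 2 (1/2) 4 10 16 (-4) 0 0 0 0 2 y
    convert h using 1
    simp only [EF]; ring
  have h1 : ∀ y : ℝ, 0 < y → 0 < EF 0 0 2 (-10) 6 (1/2) 2 4 8 (-12) 0 0 0 2 6 y := by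
    refine pos_on_of_hasDerivAt (fun y => EF 0 0 2 (-10) 6 (1/2) 2 4 8 (-12) 0 0 0 2 6 y) (fun y => EF 0 0 4 (-16) 2 (1/2) 4 10 16 (-4) 0 0 0 0 2 y) (fun y => ?_) (by norm_num [EF]) h2
    have h := EF_hasDerivAt 0 0 2 (-10) 6 (1/2) 2 4 8 (-12) 0 0 0 2 6 y
    convert h using 1
    simp only [EF]; ring
  have h0 : ∀ y : ℝ, 0 < y → 0 < EF 0 0 1 (-6) 6 (1/2) 0 4 0 (-12) 0 0 1 6 6 y := by
    refine pos_on_of_hasDerivAt (fun y => EF 0 0 1 (-6) 6 (1/2) 0 4 0 (-12) 0 0 1 6 6 y) (fun y => EF 0 0 2 (-10) 6 (1/2) 2 4 8 (-12) 0 0 0 2 6 y) (fun y => ?_) (by norm_num [EF]) h1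
    have h := EF_hasDerivAt 0 0 1 (-6) 6 (1/2) 0 4 0 (-12) 0 0 1 6 6 y
    convert h using 1
    simp only [EF]; ring
  exact h0

lemma R_pos : ∀ x : ℝ, 0 < x → 0 < EF 0 0 0 0 (3/2) 0 (-1) (3/2) (-3) (-3) (-1/8) (-1/2) 0 3 (3/2) x := by
  have h8 : ∀ y : ℝ, 0 < y → 0 < EF 0 0 0 0 384 0 (-1) (-45/2) (-147) (-279) 0 0 0 0 0 y := by
    intro y hy
    have e1 := Real.exp_pos y
    have he : 1+y+y^2/2+y^3/6 ≤ Real.exp y := cubic_le_exp hy.le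
    have h2 : Real.exp (2*y) = Real.exp y * Real.exp y := by rw [two_mul, Real.exp_add]
    have key : (y^3+45/2*y^2+147*y+279) * Real.exp y < 384 * Real.exp (2*y) := by
      rw [h2]
      have h3 : (y^3+45/2*y^2+147*y+279) < 384*(1+y+y^2/2+y^3/6) := by nlinarith
      nlinarith [mul_le_mul_of_nonneg_left he (by positivity : (0:ℝ) ≤ 384 * Real.exp y)]
    simp only [EF]
    nlinarith [key]
  have h7 : ∀ y : ℝ, 0 < y → 0 < EF 0 0 0 0 192 0 (-1) (-39/2) (-108) (-171) 0 0 0 0 0 y := by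
    refine pos_on_of_hasDerivAt (fun y => EF 0 0 0 0 192 0 (-1) (-39/2) (-108) (-171) 0 0 0 0 0 y) (fun y => EF 0 0 0 0 384 0 (-1) (-45/2) (-147) (-279) 0 0 0 0 0 y) (fun y => ?_) (by norm_num [EF]) h8
    have h := EF_hasDerivAt 0 0 0 0 192 0 (-1) (-39/2) (-108) (-171) 0 0 0 0 0 y
    convert h using 1
    simp only [EF]; ring
  have h6 : ∀ y : ℝ, 0 < y → 0 < EF 0 0 0 0 96 0 (-1) (-33/2) (-75) (-96) 0 0 0 0 0 y := by
    refine pos_on_of_hasDerivAt (fun y => EF 0 0 0 0 96 0 (-1) (-33/2) (-75) (-96) 0 0 0 0 0 y) (fun y => EF 0 0 0 0 192 0 (-1) (-39/2) (-108) (-171) 0 0 0 0 0 y) (fun y => ?_) (by norm_num [EF]) h7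
    have h := EF_hasDerivAt 0 0 0 0 96 0 (-1) (-33/2) (-75) (-96) 0 0 0 0 0 y
    convert h using 1
    simp only [EF]; ring
  have h5 : ∀ y : ℝ, 0 < y → 0 < EF 0 0 0 0 48 0 (-1) (-27/2) (-48) (-48) 0 0 0 0 0 y := by
    refine pos_on_of_hasDerivAt (fun y => EF 0 0 0 0 48 0 (-1) (-27/2) (-48) (-48) 0 0 0 0 0 y) (fun y => EF 0 0 0 0 96 0 (-1) (-33/2) (-75) (-96) 0 0 0 0 0 y) (fun y => ?_) (by norm_num [EF]) h6
    have h := EF_hasDerivAt 0 0 0 0 48 0 (-1) (-27/2) (-48) (-48) 0 0 0 0 0 y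
    convert h using 1
    simp only [EF]; ring
  have h4 : ∀ y : ℝ, 0 < y → 0 < EF 0 0 0 0 24 0 (-1) (-21/2) (-27) (-21) 0 0 0 0 (-3) y := by
    refine pos_on_of_hasDerivAt (fun y => EF 0 0 0 0 24 0 (-1) (-21/2) (-27) (-21) 0 0 0 0 (-3) y) (fun y => EF 0 0 0 0 48 0 (-1) (-27/2) (-48) (-48) 0 0 0 0 0 y) (fun y => ?_) (by norm_num [EF]) h5
    have h := EF_hasDerivAt 0 0 0 0 24 0 (-1) (-21/2) (-27) (-21) 0 0 0 0 (-3) y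
    convert h using 1
    simp only [EF]; ring
  have h3 : ∀ y : ℝ, 0 < y → 0 < EF 0 0 0 0 12 0 (-1) (-15/2) (-12) (-9) 0 0 0 (-3) (-3) y := by
    refine pos_on_of_hasDerivAt (fun y => EF 0 0 0 0 12 0 (-1) (-15/2) (-12) (-9) 0 0 0 (-3) (-3) y) (fun y => EF 0 0 0 0 24 0 (-1) (-21/2) (-27) (-21) 0 0 0 0 (-3) y) (fun y => ?_) (by norm_num [EF]) h4
    have h := EF_hasDerivAt 0 0 0 0 12 0 (-1) (-15/2) (-12) (-9) 0 0 0 (-3) (-3) y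
    convert h using 1
    simp only [EF]; ring
  have h2 : ∀ y : ℝ, 0 < y → 0 < EF 0 0 0 0 6 0 (-1) (-9/2) (-3) (-6) 0 0 (-3/2) (-3) 0 y := by
    refine pos_on_of_hasDerivAt (fun y => EF 0 0 0 0 6 0 (-1) (-9/2) (-3) (-6) 0 0 (-3/2) (-3) 0 y) (fun y => EF 0 0 0 0 12 0 (-1) (-15/2) (-12) (-9) 0 0 0 (-3) (-3) y) (fun y => ?_) (by norm_num [EF]) h3
    have h := EF_hasDerivAt 0 0 0 0 6 0 (-1) (-9/2) (-3) (-6) 0 0 (-3/2) (-3) 0 y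
    convert h using 1
    simp only [EF]; ring
  have h1 : ∀ y : ℝ, 0 < y → 0 < EF 0 0 0 0 3 0 (-1) (-3/2) 0 (-6) 0 (-1/2) (-3/2) 0 3 y := by
    refine pos_on_of_hasDerivAt (fun y => EF 0 0 0 0 3 0 (-1) (-3/2) 0 (-6) 0 (-1/2) (-3/2) 0 3 y) (fun y => EF 0 0 0 0 6 0 (-1) (-9/2) (-3) (-6) 0 0 (-3/2) (-3) 0 y) (fun y => ?_) (by norm_num [EF]) h2
    have h := EF_hasDerivAt 0 0 0 0 3 0 (-1) (-3/2) 0 (-6) 0 (-1/2) (-3/2) 0 3 y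
    convert h using 1
    simp only [EF]; ring
  have h0 : ∀ y : ℝ, 0 < y → 0 < EF 0 0 0 0 (3/2) 0 (-1) (3/2) (-3) (-3) (-1/8) (-1/2) 0 3 (3/2) y := by
    refine pos_on_of_hasDerivAt (fun y => EF 0 0 0 0 (3/2) 0 (-1) (3/2) (-3) (-3) (-1/8) (-1/2) 0 3 (3/2) y) (fun y => EF 0 0 0 0 3 0 (-1) (-3/2) 0 (-6) 0 (-1/2) (-3/2) 0 3 y) (fun y => ?_) (by norm_num [EF]) h1
    have h := EF_hasDerivAt 0 0 0 0 (3/2) 0 (-1) (3/2) (-3) (-3) (-1/8) (-1/2) 0 3 (3/2) y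
    convert h using 1
    simp only [EF]; ring
  exact h0

lemma H_pos : ∀ x : ℝ, 0 < x → 0 < EF 0 0 0 0 0 0 0 0 1 (-3) 0 0 (1/2) 2 3 x := by
  have h3 : ∀ y : ℝ, 0 < y → 0 < EF 0 0 0 0 0 0 0 0 1 0 0 0 0 0 0 y := by
    intro y hy
    have e1 := Real.exp_pos y
    simp only [EF]
    nlinarith [mul_pos hy e1]
  have h2 : ∀ y : ℝ, 0 < y → 0 < EF 0 0 0 0 0 0 0 0 1 (-1) 0 0 0 0 1 y := by
    refine pos_on_of_hasDerivAt (fun y => EF 0 0 0 0 0 0 0 0 1 (-1) 0 0 0 0 1 y) (fun y => EF 0 0 0 0 0 0 0 0 1 0 0 0 0 0 0 y) (fun y => ?_) (by norm_num [EF]) h3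
    have h := EF_hasDerivAt 0 0 0 0 0 0 0 0 1 (-1) 0 0 0 0 1 y
    convert h using 1
    simp only [EF]; ring
  have h1 : ∀ y : ℝ, 0 < y → 0 < EF 0 0 0 0 0 0 0 0 1 (-2) 0 0 0 1 2 y := by
    refine pos_on_of_hasDerivAt (fun y => EF 0 0 0 0 0 0 0 0 1 (-2) 0 0 0 1 2 y) (fun y => EF 0 0 0 0 0 0 0 0 1 (-1) 0 0 0 0 1 y) (fun y => ?_) (by norm_num [EF]) h2
    have h := EF_hasDerivAt 0 0 0 0 0 0 0 0 1 (-2) 0 0 0 1 2 y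
    convert h using 1
    simp only [EF]; ring
  have h0 : ∀ y : ℝ, 0 < y → 0 < EF 0 0 0 0 0 0 0 0 1 (-3) 0 0 (1/2) 2 3 y := by
    refine pos_on_of_hasDerivAt (fun y => EF 0 0 0 0 0 0 0 0 1 (-3) 0 0 (1/2) 2 3 y) (fun y => EF 0 0 0 0 0 0 0 0 1 (-2) 0 0 0 1 2 y) (fun y => ?_) (by norm_num [EF]) h1
    have h := EF_hasDerivAt 0 0 0 0 0 0 0 0 1 (-3) 0 0 (1/2) 2 3 y
    convert h using 1
    simp only [EF]; ring
  exact h0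


lemma f1_pos : ∀ x : ℝ, 0 < x → 0 < f 1 x := by
  intro x hx
  rw [f1_eq]
  have := Real.add_one_le_exp x
  linarith

lemma hasDerivAt_f1 (x : ℝ) : HasDerivAt (f 1) (Real.exp x) x := by
  have h : f 1 = fun y => Real.exp y - 1 := funext f1_eq
  rw [h]
  exact (Real.hasDerivAt_exp x).sub_const 1

lemma hasDerivAt_f2 (x : ℝ) : HasDerivAt (f 2) (f 1 x) x := by
  have h : f 2 = fun y => Real.exp y - 1 - y := funext f2_eq
  rw [h, f1_eq]
  exact ((Real.hasDerivAt_exp x).sub_const 1).sub (hasDerivAt_id x)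

lemma hasDerivAt_f3 (x : ℝ) : HasDerivAt (f 3) (f 2 x) x := by
  have h : f 3 = fun y => Real.exp y - 1 - y - y ^ 2 / 2 := funext f3_eq
  rw [h, f2_eq]
  have h1 := (((Real.hasDerivAt_exp x).sub_const 1).sub (hasDerivAt_id x)).sub
    ((hasDerivAt_pow 2 x).div_const 2)
  exact h1.congr_deriv (by push_cast; ring)

lemma f2_pos : ∀ x : ℝ, 0 < x → 0 < f 2 x :=
  pos_on_of_hasDerivAt (f 2) (f 1) hasDerivAt_f2 (by norm_num [f2_eq]) f1_pos

lemma f3_pos : ∀ x : ℝ, 0 < x → 0 < f 3 x :=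
  pos_on_of_hasDerivAt (f 3) (f 2) hasDerivAt_f3 (by norm_num [f3_eq]) f2_pos

/-- First derivative of `phi3`. -/
noncomputable def phi3d (x : ℝ) : ℝ :=
  1 + (3*x^2*f 3 x - x^3*f 2 x)/(2*(f 3 x)^2)

/-- Second derivative of `phi3`. -/
noncomputable def phi3dd (x : ℝ) : ℝ :=
  x * (6*(f 3 x)^2 - 6*x*(f 2 x)*(f 3 x) - x^2*(f 1 x)*(f 3 x) + 2*x^2*(f 2 x)^2)
    / (2*(f 3 x)^3)

lemma hasDerivAt_phi3 {x : ℝ} (hx : 0 < x) : HasDerivAt phi3 (phi3d x) x := by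
  have h3 := f3_pos x hx
  have hne : f 3 x ≠ 0 := ne_of_gt h3
  have e2 : f 2 x = f 3 x + x^2/2 := by rw [f2_eq, f3_eq]; ring
  have e1 : f 1 x = f 3 x + x^2/2 + x := by rw [f1_eq, f3_eq]; ring
  have hnum : HasDerivAt (fun y => y * f 2 y) (1 * f 2 x + x * f 1 x) x :=
    (hasDerivAt_id x).mul (hasDerivAt_f2 x)
  have h := hnum.div (hasDerivAt_f3 x) hne
  have heq : phi3 = fun y => (fun y => y * f 2 y) y / f 3 y := rfl
  rw [heq]
  refine h.congr_deriv ?_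
  simp only [phi3d]
  rw [e1, e2]
  field_simp
  ring

lemma hasDerivAt_phi3d {x : ℝ} (hx : 0 < x) : HasDerivAt phi3d (phi3dd x) x := by
  have h3 := f3_pos x hx
  have hne : f 3 x ≠ 0 := ne_of_gt h3
  have e2 : f 2 x = f 3 x + x^2/2 := by rw [f2_eq, f3_eq]; ring
  have e1 : f 1 x = f 3 x + x^2/2 + x := by rw [f1_eq, f3_eq]; ring
  have hden : (2:ℝ) * (f 3 x)^2 ≠ 0 := by positivity
  have hnum : HasDerivAt (fun y => 3*y^2*f 3 y - y^3*f 2 y)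
      ((3*(↑(2:ℕ)*x^(2-1))) * f 3 x + 3*x^2 * f 2 x - ((↑(3:ℕ)*x^(3-1)) * f 2 x + x^3 * f 1 x)) x :=
    (((hasDerivAt_pow 2 x).const_mul 3).mul (hasDerivAt_f3 x)).sub
      ((hasDerivAt_pow 3 x).mul (hasDerivAt_f2 x))
  have hd : HasDerivAt (fun y => 2*(f 3 y)^2) (2*(↑(2:ℕ) * f 3 x ^(2-1) * f 2 x)) x :=
    ((hasDerivAt_f3 x).pow 2).const_mul 2
  have h := (hnum.div hd hden).const_add 1
  have heq : phi3d = fun y => 1 + (fun y => 3*y^2*f 3 y - y^3*f 2 y) y / (fun y => 2*(f 3 y)^2) y := rfl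
  rw [heq]
  refine h.congr_deriv ?_
  simp only [phi3dd]
  rw [e1, e2]
  push_cast
  field_simp
  ring

lemma deriv_phi3_eq {x : ℝ} (hx : 0 < x) : deriv phi3 x = phi3d x :=
  (hasDerivAt_phi3 hx).deriv

lemma deriv_phi3_eventually {x : ℝ} (hx : 0 < x) : deriv phi3 =ᶠ[nhds x] phi3d := by
  filter_upwards [Ioi_mem_nhds hx] with y hy
  exact deriv_phi3_eq hy

lemma deriv_deriv_phi3 {x : ℝ} (hx : 0 < x) : deriv (deriv phi3) x = phi3dd x := by
  rw [(deriv_phi3_eventually hx).deriv_eq]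
  exact (hasDerivAt_phi3d hx).deriv

lemma P_pos {x : ℝ} (hx : 0 < x) :
    0 < 6*(f 3 x)^2 - 6*x*(f 2 x)*(f 3 x) - x^2*(f 1 x)*(f 3 x) + 2*x^2*(f 2 x)^2 := by
  have h := Q_pos x hx
  have heq : EF 0 0 1 (-6) 6 (1/2) 0 4 0 (-12) 0 0 1 6 6 x
      = 6*(f 3 x)^2 - 6*x*(f 2 x)*(f 3 x) - x^2*(f 1 x)*(f 3 x) + 2*x^2*(f 2 x)^2 := by
    simp only [EF, f1_eq, f2_eq, f3_eq, two_mul, Real.exp_add]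
    ring
  linarith [heq ▸ h]

lemma R_pos' {x : ℝ} (hx : 0 < x) :
    0 < 3/2*(f 3 x)^2 + 3*x^2*(f 3 x) - x^3*(f 2 x) := by
  have h := R_pos x hx
  have heq : EF 0 0 0 0 (3/2) 0 (-1) (3/2) (-3) (-3) (-1/8) (-1/2) 0 3 (3/2) x
      = 3/2*(f 3 x)^2 + 3*x^2*(f 3 x) - x^3*(f 2 x) := by
    simp only [EF, f2_eq, f3_eq, two_mul, Real.exp_add]
    ring
  linarith [heq ▸ h]

lemma H_pos' {x : ℝ} (hx : 0 < x) : 0 < x * f 2 x - 3 * f 3 x := by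
  have h := H_pos x hx
  have heq : EF 0 0 0 0 0 0 0 0 1 (-3) 0 0 (1/2) 2 3 x
      = x * f 2 x - 3 * f 3 x := by
    simp only [EF, f2_eq, f3_eq]
    ring
  linarith [heq ▸ h]

lemma phi3dd_pos {x : ℝ} (hx : 0 < x) : 0 < phi3dd x := by
  have h3 := f3_pos x hx
  exact div_pos (mul_pos hx (P_pos hx)) (by positivity)

lemma phi3d_gt {x : ℝ} (hx : 0 < x) : 1/4 < phi3d x := by
  have h3 := f3_pos x hx
  have hne : f 3 x ≠ 0 := ne_of_gt h3
  have key : phi3d x = 1/4 + (3/2*(f 3 x)^2 + 3*x^2*(f 3 x) - x^3*(f 2 x))/(2*(f 3 x)^2) := by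
    simp only [phi3d]
    field_simp
    ring
  rw [key]
  have := div_pos (R_pos' hx) (by positivity : (0:ℝ) < 2*(f 3 x)^2)
  linarith

lemma phi3d_le_one {x : ℝ} (hx : 0 < x) : phi3d x ≤ 1 := by
  have h3 := f3_pos x hx
  have hH := H_pos' hx
  have hnum : 3*x^2*f 3 x - x^3*f 2 x ≤ 0 := by nlinarith
  have := div_nonpos_of_nonpos_of_nonneg hnum (by positivity : (0:ℝ) ≤ 2*(f 3 x)^2)
  simp only [phi3d]
  linarith

/-- `φ₃` is convex on `(0, ∞)` (with positive second derivative there), strictly increasing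
on `(0, ∞)`, and for `x > 0` one has `φ₃(x) ≥ 3` and `1/4 ≤ φ₃′(x) ≤ 1`. -/
theorem phi3_properties :
    ConvexOn ℝ (Set.Ioi (0 : ℝ)) phi3 ∧
      (∀ x : ℝ, 0 < x → 0 < deriv (deriv phi3) x) ∧
      StrictMonoOn phi3 (Set.Ioi (0 : ℝ)) ∧
      ∀ x : ℝ, 0 < x → 3 ≤ phi3 x ∧ 1 / 4 ≤ deriv phi3 x ∧ deriv phi3 x ≤ 1 := by
  have hcont : ContinuousOn phi3 (Set.Ioi 0) := fun y hy =>
    (hasDerivAt_phi3 (Set.mem_Ioi.1 hy)).differentiableAt.continuousAt.continuousWithinAt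
  refine ⟨?_, ?_, ?_, ?_⟩
  · refine convexOn_of_deriv2_nonneg (convex_Ioi 0) hcont ?_ ?_ ?_
    · intro y hy
      rw [interior_Ioi] at hy
      exact (hasDerivAt_phi3 (Set.mem_Ioi.1 hy)).differentiableAt.differentiableWithinAt
    · intro y hy
      rw [interior_Ioi] at hy
      have := (deriv_phi3_eventually (Set.mem_Ioi.1 hy)).differentiableAt_iff.2
        (hasDerivAt_phi3d (Set.mem_Ioi.1 hy)).differentiableAt
      exact this.differentiableWithinAt
    · intro y hy
      rw [interior_Ioi] at hy
      have hy' := Set.mem_Ioi.1 hy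
      show 0 ≤ deriv^[2] phi3 y
      have : deriv^[2] phi3 y = deriv (deriv phi3) y := by
        simp [Function.iterate_succ, Function.iterate_zero]
      rw [this, deriv_deriv_phi3 hy']
      exact (phi3dd_pos hy').le
  · intro x hx
    rw [deriv_deriv_phi3 hx]
    exact phi3dd_pos hx
  · refine strictMonoOn_of_deriv_pos (convex_Ioi 0) hcont ?_
    intro y hy
    rw [interior_Ioi] at hy
    have hy' := Set.mem_Ioi.1 hy
    rw [deriv_phi3_eq hy']
    linarith [phi3d_gt hy']
  · intro x hx
    have h3 := f3_pos x hx
    refine ⟨?_, ?_, ?_⟩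
    · have hH := H_pos' hx
      rw [phi3, le_div_iff₀ h3]
      linarith
    · rw [deriv_phi3_eq hx]
      linarith [phi3d_gt hx]
    · rw [deriv_phi3_eq hx]
      exact phi3d_le_one hx
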